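/- arXiv:1602.06333 — 4 statements merged into one kernel-verified Lean document; each statement's English description precedes it below -/
import Mathlib

section
/- Let A be a compact self-adjoint injective operator on L²(a,b) with orthonormal eigenbasis (ψ_k) and positive nonincreasing eigenvalues (λ_k). Let f, ḡ ∈ L²(a,b) satisfy ‖Af − ḡ‖ ≤ ε and Σ_k β_k² |f_k|² ≤ E² where f_k = (f, ψ_k) and (β_k) are positive reals. Define k₂ as the largest k with λ_k ≥ (ε/E)β_k and f₂ = Σ_{k=1}^{k₂} (ḡ_k/λ_k) ψ_k with ḡ_k = (ḡ, ψ_k). Then ‖A(f − f₂)‖ ≤ √2 ε. -/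
/-- Spectral form of the data bound for the truncated regularized solution.
Working in the eigenbasis `(ψ_k)` of the compact self-adjoint injective operator `A`,
`f` and `ḡ` are identified with their Fourier coefficient sequences, `(Af)_k = λ_k f_k`.
If `‖Af − ḡ‖ ≤ ε` and `Σ_k β_k² f_k² ≤ E²`, and `k₂` is the largest index with
`λ_k ≥ (ε/E) β_k`, then the truncated expansion `f₂`, with coefficients `ḡ_k/λ_k`
for `k ≤ k₂` and `0` beyond, satisfies `‖A(f − f₂)‖ ≤ √2 ε`, i.e.
`Σ_k λ_k² (f_k − (f₂)_k)² ≤ 2 ε²`. -/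
theorem stmt6 (lam β f g : ℕ → ℝ)
    (hlampos : ∀ k, 0 < lam k) (hlammono : Antitone lam)
    (hlamlim : Filter.Tendsto lam Filter.atTop (nhds 0))
    (hβpos : ∀ k, 0 < β k)
    (ε E : ℝ) (hε : 0 < ε) (hE : 0 < E)
    (hnoise_sum : Summable fun k => (lam k * f k - g k) ^ 2)
    (hnoise : (∑' k, (lam k * f k - g k) ^ 2) ≤ ε ^ 2)
    (hconstr_sum : Summable fun k => (β k) ^ 2 * (f k) ^ 2)
    (hconstr : (∑' k, (β k) ^ 2 * (f k) ^ 2) ≤ E ^ 2)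
    (k₂ : ℕ) (hk₂ : IsGreatest {k : ℕ | (ε / E) * β k ≤ lam k} k₂)
    (f₂ : ℕ → ℝ) (hf₂ : ∀ k, f₂ k = if k ≤ k₂ then g k / lam k else 0) :
    (∑' k, (lam k) ^ 2 * (f k - f₂ k) ^ 2) ≤ 2 * ε ^ 2 := by
  have key : ∀ k, (lam k) ^ 2 * (f k - f₂ k) ^ 2 ≤
      (lam k * f k - g k) ^ 2 + (ε / E) ^ 2 * ((β k) ^ 2 * (f k) ^ 2) := by
    intro k
    rw [hf₂ k]
    by_cases h : k ≤ k₂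
    · simp only [if_pos h]
      have hl := (hlampos k).ne'
      have : lam k ^ 2 * (f k - g k / lam k) ^ 2 = (lam k * f k - g k) ^ 2 := by
        field_simp
      rw [this]
      have : (0:ℝ) ≤ (ε / E) ^ 2 * ((β k) ^ 2 * (f k) ^ 2) := by positivity
      linarith
    · simp only [if_neg h, sub_zero]
      have hlt : lam k < (ε / E) * β k := by
        by_contra hle
        exact h (hk₂.2 (le_of_not_gt hle))
      have h1 : lam k ^ 2 ≤ ((ε / E) * β k) ^ 2 := by
        have := (hlampos k).le
        nlinarith
      have h2 : (0:ℝ) ≤ (lam k * f k - g k) ^ 2 := sq_nonneg _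
      nlinarith [sq_nonneg (f k)]
  have hsum2 : Summable fun k => (lam k * f k - g k) ^ 2 +
      (ε / E) ^ 2 * ((β k) ^ 2 * (f k) ^ 2) :=
    hnoise_sum.add (hconstr_sum.mul_left _)
  have hle : (∑' k, (lam k) ^ 2 * (f k - f₂ k) ^ 2) ≤
      ∑' k, ((lam k * f k - g k) ^ 2 + (ε / E) ^ 2 * ((β k) ^ 2 * (f k) ^ 2)) := by
    by_cases hs : Summable fun k => (lam k) ^ 2 * (f k - f₂ k) ^ 2
    · exact Summable.tsum_le_tsum key hs hsum2
    · rw [tsum_eq_zero_of_not_summable hs]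
      exact tsum_nonneg fun k => by positivity
  rw [Summable.tsum_add hnoise_sum (hconstr_sum.mul_left _), tsum_mul_left] at hle
  have hEb : (ε / E) ^ 2 * (∑' k, (β k) ^ 2 * (f k) ^ 2) ≤ (ε / E) ^ 2 * E ^ 2 :=
    mul_le_mul_of_nonneg_left hconstr (by positivity)
  have : (ε / E) ^ 2 * E ^ 2 = ε ^ 2 := by field_simp
  nlinarith
end

section
/- Under the hypotheses ‖Af − ḡ‖ ≤ ε and Σ_k |f_k|² ≤ E² (constraint operator B = I), with f₁ the truncation of Σ(ḡ_k/λ_k)ψ_k at the largest k₁ with λ_k ≥ ε/E, the bounds ‖A(f − f₁)‖ ≤ √2 ε, ‖f − f₁‖ ≤ √2 E, and ‖A(f − f₁)‖² + (ε/E)²‖f − f₁‖² ≤ 4ε² hold. -/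
/-- The case of the identity constraint operator `B = I`. In the eigenbasis of `A`,
if `‖Af − ḡ‖ ≤ ε` and `Σ_k f_k² ≤ E²`, and `f₁` is the truncation of
`Σ (ḡ_k/λ_k) ψ_k` at the largest `k₁` with `λ_k ≥ ε/E`, then
`‖A(f − f₁)‖ ≤ √2 ε`, `‖f − f₁‖ ≤ √2 E`, and
`‖A(f − f₁)‖² + (ε/E)² ‖f − f₁‖² ≤ 4ε²`. -/
theorem stmt12 (lam f g : ℕ → ℝ)
    (hlampos : ∀ k, 0 < lam k) (hlammono : Antitone lam)
    (hlamlim : Filter.Tendsto lam Filter.atTop (nhds 0))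
    (ε E : ℝ) (hε : 0 < ε) (hE : 0 < E)
    (hnoise_sum : Summable fun k => (lam k * f k - g k) ^ 2)
    (hnoise : (∑' k, (lam k * f k - g k) ^ 2) ≤ ε ^ 2)
    (hconstr_sum : Summable fun k => (f k) ^ 2)
    (hconstr : (∑' k, (f k) ^ 2) ≤ E ^ 2)
    (k₁ : ℕ) (hk₁ : IsGreatest {k : ℕ | ε / E ≤ lam k} k₁)
    (f₁ : ℕ → ℝ) (hf₁ : ∀ k, f₁ k = if k ≤ k₁ then g k / lam k else 0) :
    (∑' k, (lam k) ^ 2 * (f k - f₁ k) ^ 2) ≤ 2 * ε ^ 2 ∧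
    (∑' k, (f k - f₁ k) ^ 2) ≤ 2 * E ^ 2 ∧
    (∑' k, (lam k) ^ 2 * (f k - f₁ k) ^ 2) +
      (ε / E) ^ 2 * (∑' k, (f k - f₁ k) ^ 2) ≤ 4 * ε ^ 2 := by
  -- key pointwise facts
  have hlow : ∀ k, k ≤ k₁ → ε / E ≤ lam k := fun k hk =>
    le_trans hk₁.1 (hlammono hk)
  have hhigh : ∀ k, k₁ < k → lam k < ε / E := by
    intro k hk
    by_contra h
    push_neg at h
    exact absurd (hk₁.2 h) (not_le.mpr hk)
  have hεE : 0 < ε / E := div_pos hε hE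
  have hb1 : ∀ k, lam k ^ 2 * (f k - f₁ k) ^ 2 ≤
      (lam k * f k - g k) ^ 2 + (ε / E) ^ 2 * f k ^ 2 := by
    intro k
    rw [hf₁ k]
    by_cases hk : k ≤ k₁
    · rw [if_pos hk]
      have hne : lam k ≠ 0 := (hlampos k).ne'
      have key : lam k * (f k - g k / lam k) = lam k * f k - g k := by
        field_simp
      have : lam k ^ 2 * (f k - g k / lam k) ^ 2 = (lam k * f k - g k) ^ 2 := by
        rw [← key]; ring
      rw [this]
      nlinarith [sq_nonneg (f k), sq_nonneg (ε / E * f k)]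
    · rw [if_neg hk]
      have h1 : lam k < ε / E := hhigh k (not_le.mp hk)
      have h2 : 0 ≤ lam k := (hlampos k).le
      have h3 : lam k ^ 2 ≤ (ε / E) ^ 2 := pow_le_pow_left₀ h2 h1.le 2
      nlinarith [sq_nonneg (f k), sq_nonneg (lam k * f k - g k),
        mul_le_mul_of_nonneg_right h3 (sq_nonneg (f k))]
  have hb2 : ∀ k, (f k - f₁ k) ^ 2 ≤
      (E / ε) ^ 2 * (lam k * f k - g k) ^ 2 + f k ^ 2 := by
    intro k
    rw [hf₁ k]
    by_cases hk : k ≤ k₁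
    · rw [if_pos hk]
      have hne : lam k ≠ 0 := (hlampos k).ne'
      have key : lam k * (f k - g k / lam k) = lam k * f k - g k := by
        field_simp
      have h1 : ε / E ≤ lam k := hlow k hk
      have hone : 1 ≤ E / ε * lam k := by
        rw [div_mul_eq_mul_div, le_div_iff₀ hε]
        calc 1 * ε = ε := one_mul ε
        _ ≤ E * lam k := by
            rw [div_le_iff₀ hE] at h1; linarith [h1]
      have hsq : 1 ≤ (E / ε * lam k) ^ 2 := by nlinarith [hone]
      have : (E / ε) ^ 2 * (lam k * f k - g k) ^ 2 =
          (E / ε * lam k) ^ 2 * (f k - g k / lam k) ^ 2 := by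
        rw [← key]; ring
      rw [this]
      nlinarith [sq_nonneg (f k), sq_nonneg (f k - g k / lam k)]
    · rw [if_neg hk]
      nlinarith [sq_nonneg (E / ε * (lam k * f k - g k))]
  -- summability and majorant sums
  have hs1 : Summable fun k => (lam k * f k - g k) ^ 2 + (ε / E) ^ 2 * f k ^ 2 :=
    hnoise_sum.add (hconstr_sum.mul_left _)
  have hs2 : Summable fun k => (E / ε) ^ 2 * (lam k * f k - g k) ^ 2 + f k ^ 2 :=
    (hnoise_sum.mul_left _).add hconstr_sum
  have hsum1 : Summable fun k => lam k ^ 2 * (f k - f₁ k) ^ 2 :=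
    Summable.of_nonneg_of_le (fun k => by positivity) hb1 hs1
  have hsum2 : Summable fun k => (f k - f₁ k) ^ 2 :=
    Summable.of_nonneg_of_le (fun k => sq_nonneg _) hb2 hs2
  have T1 : (∑' k, lam k ^ 2 * (f k - f₁ k) ^ 2) ≤ 2 * ε ^ 2 := by
    calc (∑' k, lam k ^ 2 * (f k - f₁ k) ^ 2)
        ≤ ∑' k, ((lam k * f k - g k) ^ 2 + (ε / E) ^ 2 * f k ^ 2) :=
          Summable.tsum_le_tsum hb1 hsum1 hs1
      _ = (∑' k, (lam k * f k - g k) ^ 2) + (ε / E) ^ 2 * ∑' k, f k ^ 2 := by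
          rw [Summable.tsum_add hnoise_sum (hconstr_sum.mul_left _), tsum_mul_left]
      _ ≤ ε ^ 2 + (ε / E) ^ 2 * E ^ 2 := by
          have := mul_le_mul_of_nonneg_left hconstr (by positivity : (0:ℝ) ≤ (ε / E) ^ 2)
          linarith
      _ = 2 * ε ^ 2 := by field_simp; ring
  have T2 : (∑' k, (f k - f₁ k) ^ 2) ≤ 2 * E ^ 2 := by
    calc (∑' k, (f k - f₁ k) ^ 2)
        ≤ ∑' k, ((E / ε) ^ 2 * (lam k * f k - g k) ^ 2 + f k ^ 2) :=
          Summable.tsum_le_tsum hb2 hsum2 hs2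
      _ = (E / ε) ^ 2 * (∑' k, (lam k * f k - g k) ^ 2) + ∑' k, f k ^ 2 := by
          rw [Summable.tsum_add (hnoise_sum.mul_left _) hconstr_sum, tsum_mul_left]
      _ ≤ (E / ε) ^ 2 * ε ^ 2 + E ^ 2 := by
          have := mul_le_mul_of_nonneg_left hnoise (by positivity : (0:ℝ) ≤ (E / ε) ^ 2)
          linarith
      _ = 2 * E ^ 2 := by field_simp; ring
  refine ⟨T1, T2, ?_⟩
  have h3 : (ε / E) ^ 2 * (∑' k, (f k - f₁ k) ^ 2) ≤ (ε / E) ^ 2 * (2 * E ^ 2) :=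
    mul_le_mul_of_nonneg_left T2 (by positivity)
  have h4 : (ε / E) ^ 2 * (2 * E ^ 2) = 2 * ε ^ 2 := by field_simp
  linarith
end

section
/- Let p : (0,∞) → (0,∞) be convex, with p(r)/r positive and increasing, and p(0⁺) = 0. Suppose (λ_k), (β_k) are positive sequences with λ_k² ≥ β_k² p(β_k⁻²) for all k. Then for every f in ℓ² with Σ_k β_k²|f_k|² > 0, the inequality p(‖f‖²/‖Bf‖²) ≤ ‖Af‖²/‖Bf‖² holds, where ‖f‖² = Σ|f_k|², ‖Af‖² = Σ λ_k²|f_k|², ‖Bf‖² = Σ β_k²|f_k|². -/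
/-- Supporting line for a convex function on `Ioi 0` at an interior point. -/
lemma support_line {p : ℝ → ℝ} (hc : ConvexOn ℝ (Set.Ioi (0 : ℝ)) p) {x₀ : ℝ}
    (hx₀ : 0 < x₀) : ∃ m : ℝ, ∀ b ∈ Set.Ioi (0 : ℝ), p x₀ + m * (b - x₀) ≤ p b := by
  set L : Set ℝ := (fun b => (p x₀ - p b) / (x₀ - b)) '' Set.Ioo 0 x₀ with hL
  have hne : L.Nonempty := ⟨_, ⟨x₀ / 2, ⟨by positivity, by linarith⟩, rfl⟩⟩
  have hbdd : BddAbove L := by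
    refine ⟨(p (x₀ + 1) - p x₀) / (x₀ + 1 - x₀), ?_⟩
    rintro _ ⟨b, ⟨hb0, hbx⟩, rfl⟩
    exact hc.slope_mono_adjacent hb0 (by simp; linarith) hbx (by linarith)
  refine ⟨sSup L, fun b hb => ?_⟩
  rcases lt_trichotomy b x₀ with h | h | h
  · have hmem : (p x₀ - p b) / (x₀ - b) ∈ L := ⟨b, ⟨hb, h⟩, rfl⟩
    have hle := le_csSup hbdd hmem
    have hxb : (0:ℝ) < x₀ - b := by linarith
    rw [div_le_iff₀ hxb] at hle
    nlinarith
  · simp [h]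
  · have hub : sSup L ≤ (p b - p x₀) / (b - x₀) := by
      apply csSup_le hne
      rintro _ ⟨c, ⟨hc0, hcx⟩, rfl⟩
      exact hc.slope_mono_adjacent hc0 hb hcx h
    have hbx : (0:ℝ) < b - x₀ := by linarith
    rw [le_div_iff₀ hbx] at hub
    nlinarith

/-- Jensen-inequality lemma. Let `p : (0,∞) → (0,∞)` be convex, with `r ↦ p(r)/r`
positive and increasing and `p(0⁺) = 0`. If `(λ_k)`, `(β_k)` are positive with
`λ_k² ≥ β_k² p(β_k⁻²)`, then for every `f ∈ ℓ²` with `Σ_k β_k² f_k² > 0`,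
`p(‖f‖²/‖Bf‖²) ≤ ‖Af‖²/‖Bf‖²`, where `‖f‖² = Σ f_k²`, `‖Af‖² = Σ λ_k² f_k²`,
`‖Bf‖² = Σ β_k² f_k²`. -/
theorem stmt15 (p : ℝ → ℝ)
    (hp_pos : ∀ r : ℝ, 0 < r → 0 < p r)
    (hp_mono : MonotoneOn (fun r => p r / r) (Set.Ioi (0 : ℝ)))
    (hp_zero : Filter.Tendsto p (nhdsWithin 0 (Set.Ioi 0)) (nhds 0))
    (hp_conv : ConvexOn ℝ (Set.Ioi (0 : ℝ)) p)
    (lam β : ℕ → ℝ) (hlampos : ∀ k, 0 < lam k) (hβpos : ∀ k, 0 < β k)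
    (hlb : ∀ k, (β k) ^ 2 * p ((β k) ^ (-2 : ℤ)) ≤ (lam k) ^ 2)
    (f : ℕ → ℝ)
    (hf : Summable fun k => (f k) ^ 2)
    (hAf : Summable fun k => (lam k) ^ 2 * (f k) ^ 2)
    (hBf : Summable fun k => (β k) ^ 2 * (f k) ^ 2)
    (hBfpos : 0 < ∑' k, (β k) ^ 2 * (f k) ^ 2) :
    p ((∑' k, (f k) ^ 2) / (∑' k, (β k) ^ 2 * (f k) ^ 2)) ≤
      (∑' k, (lam k) ^ 2 * (f k) ^ 2) / (∑' k, (β k) ^ 2 * (f k) ^ 2) := by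
  set S := ∑' k, (β k) ^ 2 * (f k) ^ 2 with hS
  set N := ∑' k, (f k) ^ 2 with hN
  set A := ∑' k, (lam k) ^ 2 * (f k) ^ 2 with hA
  have hNpos : 0 < N := by
    by_contra h
    push_neg at h
    have hall : ∀ k, f k = 0 := by
      intro k
      have hle : (f k) ^ 2 ≤ N := Summable.le_tsum hf k (fun j _ => sq_nonneg _)
      nlinarith [sq_nonneg (f k)]
    have hS0 : S = 0 := by
      rw [hS]
      simp [hall]
    linarith
  set x₀ := N / S with hx₀def
  have hx₀pos : 0 < x₀ := div_pos hNpos hBfpos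
  obtain ⟨m, hm⟩ := support_line hp_conv hx₀pos
  have hterm : ∀ k, p x₀ * ((β k) ^ 2 * (f k) ^ 2)
      + m * ((f k) ^ 2 - x₀ * ((β k) ^ 2 * (f k) ^ 2)) ≤ (lam k) ^ 2 * (f k) ^ 2 := by
    intro k
    have hβk := hβpos k
    have hβ2 : (0:ℝ) < (β k) ^ 2 := by positivity
    have hb : ((β k) ^ 2)⁻¹ ∈ Set.Ioi (0:ℝ) := by
      simp only [Set.mem_Ioi]
      positivity
    have h1 := hm _ hb
    have h2 := hlb k
    have hz : (β k : ℝ) ^ (-2 : ℤ) = ((β k) ^ 2)⁻¹ := by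
      rw [zpow_neg]
      norm_num
    rw [hz] at h2
    have hfk := sq_nonneg (f k)
    have key : (β k) ^ 2 * (p x₀ + m * (((β k) ^ 2)⁻¹ - x₀)) ≤ (lam k) ^ 2 :=
      le_trans (mul_le_mul_of_nonneg_left h1 (le_of_lt hβ2)) h2
    have hmul := mul_le_mul_of_nonneg_right key hfk
    have e : (β k) ^ 2 * (p x₀ + m * (((β k) ^ 2)⁻¹ - x₀)) * (f k) ^ 2
        = p x₀ * ((β k) ^ 2 * (f k) ^ 2) + m * ((f k) ^ 2 - x₀ * ((β k) ^ 2 * (f k) ^ 2)) := by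
      field_simp
    linarith [hmul, e.le, e.ge]
  have hLsum : Summable (fun k => p x₀ * ((β k) ^ 2 * (f k) ^ 2)
      + m * ((f k) ^ 2 - x₀ * ((β k) ^ 2 * (f k) ^ 2))) :=
    (hBf.mul_left _).add ((hf.sub (hBf.mul_left x₀)).mul_left m)
  have hsum := Summable.tsum_le_tsum hterm hLsum hAf
  have hLHS : (∑' k, (p x₀ * ((β k) ^ 2 * (f k) ^ 2)
      + m * ((f k) ^ 2 - x₀ * ((β k) ^ 2 * (f k) ^ 2)))) = p x₀ * S := by
    rw [Summable.tsum_add (hBf.mul_left _) ((hf.sub (hBf.mul_left x₀)).mul_left m),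
      tsum_mul_left, tsum_mul_left, Summable.tsum_sub hf (hBf.mul_left x₀), tsum_mul_left]
    have hxS : x₀ * S = N := by
      rw [hx₀def]
      field_simp
    rw [← hS, ← hN, hxS]
    ring
  rw [hLHS] at hsum
  rw [le_div_iff₀ hBfpos]
  exact hsum
end

section
/- Under the hypotheses of the Jensen-inequality lemma, the stability estimate M(ε,E) := sup{‖f‖ : ‖Af‖ ≤ ε, ‖Bf‖ ≤ E} satisfies M(ε,E) ≤ E · √(p⁻¹(ε²/E²)), where p⁻¹ is the inverse function of p. -/
/-- A convex, strictly monotone function on `(0,∞)` has a nonnegative subgradient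
at every interior point. -/
lemma stmt16_subgrad (p : ℝ → ℝ) (hp_conv : ConvexOn ℝ (Set.Ioi (0 : ℝ)) p)
    (hp_strict : StrictMonoOn p (Set.Ioi (0 : ℝ))) (x₀ : ℝ) (hx₀ : 0 < x₀) :
    ∃ c : ℝ, 0 ≤ c ∧ ∀ x : ℝ, 0 < x → p x₀ + c * (x - x₀) ≤ p x := by
  set T : Set ℝ := (fun y => (p y - p x₀) / (y - x₀)) '' Set.Ioi x₀ with hT
  have hx₀m : x₀ ∈ Set.Ioi (0 : ℝ) := hx₀
  have hhalf : x₀ / 2 ∈ Set.Ioi (0 : ℝ) := by simp [Set.mem_Ioi]; linarith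
  have hTne : T.Nonempty := ⟨_, ⟨x₀ + 1, Set.mem_Ioi.mpr (lt_add_one x₀), rfl⟩⟩
  have hTbdd : BddBelow T := by
    refine ⟨(p x₀ - p (x₀ / 2)) / (x₀ - x₀ / 2), ?_⟩
    rintro t ⟨y, hy, rfl⟩
    exact hp_conv.slope_mono_adjacent hhalf (lt_trans hx₀ hy) (by linarith) hy
  refine ⟨sInf T, ?_, ?_⟩
  · refine le_csInf hTne ?_
    rintro t ⟨y, hy, rfl⟩
    have h1 : p x₀ < p y := hp_strict hx₀m (lt_trans hx₀ hy) hy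
    have h2 : (0:ℝ) < y - x₀ := by linarith [Set.mem_Ioi.mp hy]
    exact div_nonneg (by linarith) h2.le
  · intro x hx
    rcases lt_trichotomy x x₀ with h | h | h
    · have hle : (p x₀ - p x) / (x₀ - x) ≤ sInf T := by
        refine le_csInf hTne ?_
        rintro t ⟨y, hy, rfl⟩
        exact hp_conv.slope_mono_adjacent hx (lt_trans hx₀ hy) h hy
      have h2 : (0:ℝ) < x₀ - x := by linarith
      rw [div_le_iff₀ h2] at hle
      nlinarith
    · simp [h]
    · have hle : sInf T ≤ (p x - p x₀) / (x - x₀) :=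
        csInf_le hTbdd ⟨x, h, rfl⟩
      have h2 : (0:ℝ) < x - x₀ := by linarith
      rw [le_div_iff₀ h2] at hle
      nlinarith

/-- Stability estimate. Under the hypotheses of the Jensen-inequality lemma (with `p`
strictly increasing on `(0,∞)` and `q = p⁻¹` its inverse), every `f` with
`‖Af‖ ≤ ε` and `‖Bf‖ ≤ E` satisfies `‖f‖ ≤ E √(p⁻¹(ε²/E²))`; hence the stability
estimate `M(ε,E) = sup{‖f‖ : ‖Af‖ ≤ ε, ‖Bf‖ ≤ E}` is at most `E √(p⁻¹(ε²/E²))`. -/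
theorem stmt16 (p q : ℝ → ℝ)
    (hp_pos : ∀ r : ℝ, 0 < r → 0 < p r)
    (hp_mono : MonotoneOn (fun r => p r / r) (Set.Ioi (0 : ℝ)))
    (hp_zero : Filter.Tendsto p (nhdsWithin 0 (Set.Ioi 0)) (nhds 0))
    (hp_conv : ConvexOn ℝ (Set.Ioi (0 : ℝ)) p)
    (hp_strict : StrictMonoOn p (Set.Ioi (0 : ℝ)))
    (hq_inv : ∀ r : ℝ, 0 < r → q (p r) = r)
    (hq_mono : MonotoneOn q (Set.Ioi (0 : ℝ)))
    (lam β : ℕ → ℝ) (hlampos : ∀ k, 0 < lam k) (hβpos : ∀ k, 0 < β k)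
    (hlb : ∀ k, (β k) ^ 2 * p ((β k) ^ (-2 : ℤ)) ≤ (lam k) ^ 2)
    (ε E : ℝ) (hε : 0 < ε) (hE : 0 < E) :
    ∀ f : ℕ → ℝ,
      Summable (fun k => (f k) ^ 2) →
      Summable (fun k => (lam k) ^ 2 * (f k) ^ 2) →
      Summable (fun k => (β k) ^ 2 * (f k) ^ 2) →
      (∑' k, (lam k) ^ 2 * (f k) ^ 2) ≤ ε ^ 2 →
      (∑' k, (β k) ^ 2 * (f k) ^ 2) ≤ E ^ 2 →
      Real.sqrt (∑' k, (f k) ^ 2) ≤ E * Real.sqrt (q (ε ^ 2 / E ^ 2)) := by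
  intro f hSsum hAsum hBsum hAle hBle
  set S := ∑' k, (f k) ^ 2 with hSdef
  set B := ∑' k, (β k) ^ 2 * (f k) ^ 2 with hBdef
  have htpos : 0 < ε ^ 2 / E ^ 2 := by positivity
  -- q is positive at ε²/E²
  have hqpos : 0 < q (ε ^ 2 / E ^ 2) := by
    obtain ⟨r, hr, hpr⟩ : ∃ r : ℝ, 0 < r ∧ p r ≤ ε ^ 2 / E ^ 2 := by
      have := hp_zero (Metric.ball_mem_nhds (0:ℝ) htpos)
      rw [Filter.mem_map, mem_nhdsWithin] at this
      obtain ⟨U, hUopen, hU0, hUsub⟩ := this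
      obtain ⟨δ, hδ, hball⟩ := Metric.isOpen_iff.mp hUopen 0 hU0
      refine ⟨δ / 2, by linarith, ?_⟩
      have hmem : (δ/2 : ℝ) ∈ U ∩ Set.Ioi 0 := by
        constructor
        · refine hball (Metric.mem_ball.mpr ?_)
          rw [Real.dist_eq, sub_zero, abs_of_pos (by linarith)]
          linarith
        · simp only [Set.mem_Ioi]; linarith
      have := hUsub hmem
      simp only [Set.mem_preimage, Metric.mem_ball, Real.dist_eq] at this
      have := abs_lt.mp this
      linarith [this.2]
    calc 0 < r := hr
      _ = q (p r) := (hq_inv r hr).symm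
      _ ≤ q (ε ^ 2 / E ^ 2) := hq_mono (Set.mem_Ioi.mpr (hp_pos r hr)) htpos hpr
  have hSnn : 0 ≤ S := tsum_nonneg (fun k => by positivity)
  rcases eq_or_lt_of_le hSnn with hS0 | hSpos
  · rw [← hS0, Real.sqrt_zero]
    positivity
  -- B > 0
  have hBpos : 0 < B := by
    rcases eq_or_lt_of_le (tsum_nonneg (fun k => by positivity : ∀ k, 0 ≤ (β k)^2 * (f k)^2)) with h0 | h
    · exfalso
      have hall : ∀ k, f k = 0 := by
        intro k
        have h1 : (β k)^2 * (f k)^2 ≤ B := Summable.le_tsum hBsum k (fun j _ => by positivity)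
        have hB0 : B = 0 := h0.symm
        have h2 : (f k)^2 = 0 := by nlinarith [pow_pos (hβpos k) 2, sq_nonneg (f k)]
        exact pow_eq_zero_iff two_ne_zero |>.mp h2
      have : S = 0 := by
        rw [hSdef]
        convert tsum_zero with k
        simp [hall k]
      linarith
    · exact h
  set x₀ := S / B with hx₀def
  have hx₀pos : 0 < x₀ := div_pos hSpos hBpos
  obtain ⟨c, hc0, hcsub⟩ := stmt16_subgrad p hp_conv hp_strict x₀ hx₀pos
  -- pointwise bound: p x₀ * (β²f²) + c*(f² - x₀ β²f²) ≤ λ² f²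
  have hpt : ∀ k, p x₀ * ((β k)^2 * (f k)^2) + c * ((f k)^2 - x₀ * ((β k)^2 * (f k)^2))
      ≤ (lam k)^2 * (f k)^2 := by
    intro k
    have hβk : (0:ℝ) < (β k)^2 := pow_pos (hβpos k) 2
    have hxk : (0:ℝ) < ((β k):ℝ) ^ (-2 : ℤ) := zpow_pos (hβpos k) _
    have h1 := hcsub _ hxk
    have h2 := hlb k
    have hf2 : (0:ℝ) ≤ (f k)^2 := sq_nonneg _
    have hinv : ((β k):ℝ) ^ (-2 : ℤ) * (β k)^2 = 1 := by
      rw [zpow_neg, ← zpow_natCast (β k) 2]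
      exact inv_mul_cancel₀ (by positivity)
    have h3 : (β k)^2 * (p x₀ + c * ((β k) ^ (-2:ℤ) - x₀)) ≤ (β k)^2 * p ((β k) ^ (-2:ℤ)) :=
      mul_le_mul_of_nonneg_left h1 (le_of_lt hβk)
    have h4 : (β k)^2 * (p x₀ + c * ((β k) ^ (-2:ℤ) - x₀)) ≤ (lam k)^2 := le_trans h3 h2
    have h5 := mul_le_mul_of_nonneg_right h4 hf2
    calc p x₀ * ((β k)^2 * (f k)^2) + c * ((f k)^2 - x₀ * ((β k)^2 * (f k)^2))
        = ((β k)^2 * (p x₀ + c * ((β k) ^ (-2:ℤ) - x₀))) * (f k)^2 := by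
          linear_combination (-(c * (f k)^2)) * hinv
      _ ≤ (lam k)^2 * (f k)^2 := h5
  -- summability of lhs and tsum computation
  have hlhsSum : Summable (fun k => p x₀ * ((β k)^2 * (f k)^2)
      + c * ((f k)^2 - x₀ * ((β k)^2 * (f k)^2))) := by
    apply Summable.add (hBsum.mul_left _)
    exact ((hSsum.sub (hBsum.mul_left x₀)).mul_left c)
  have hlhsTsum : (∑' k, (p x₀ * ((β k)^2 * (f k)^2)
      + c * ((f k)^2 - x₀ * ((β k)^2 * (f k)^2)))) = B * p x₀ := by
    rw [Summable.tsum_add (hBsum.mul_left _) ((hSsum.sub (hBsum.mul_left x₀)).mul_left c),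
        tsum_mul_left, tsum_mul_left, Summable.tsum_sub hSsum (hBsum.mul_left x₀), tsum_mul_left]
    have hxB : x₀ * B = S := div_mul_cancel₀ S (ne_of_gt hBpos)
    rw [hxB]
    ring
  have hkey : B * p x₀ ≤ ε ^ 2 := by
    rw [← hlhsTsum]
    exact le_trans (Summable.tsum_le_tsum hpt hlhsSum hAsum) hAle
  -- step 2 : E² p(S/E²) ≤ B p(S/B)
  have hBleE : B ≤ E ^ 2 := hBle
  have hE2pos : (0:ℝ) < E ^ 2 := by positivity
  have hSE : 0 < S / E ^ 2 := div_pos hSpos hE2pos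
  have hdivle : S / E ^ 2 ≤ x₀ := by
    rw [hx₀def]
    exact div_le_div_of_nonneg_left (le_of_lt hSpos) hBpos hBleE
  have hmono := hp_mono (Set.mem_Ioi.mpr hSE) (Set.mem_Ioi.mpr hx₀pos) hdivle
  simp only at hmono
  -- hmono : p (S/E²) / (S/E²) ≤ p x₀ / x₀
  have hstep2 : E ^ 2 * p (S / E ^ 2) ≤ B * p x₀ := by
    have h1 : p (S / E^2) / (S / E^2) = E^2 * p (S / E^2) / S := by
      field_simp
    have h2 : p x₀ / x₀ = B * p x₀ / S := by
      rw [hx₀def]; field_simp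
    rw [h1, h2] at hmono
    exact (div_le_div_iff_of_pos_right hSpos).mp hmono
  have hple : p (S / E ^ 2) ≤ ε ^ 2 / E ^ 2 := by
    rw [le_div_iff₀ hE2pos]
    nlinarith
  have hfinal : S / E ^ 2 ≤ q (ε ^ 2 / E ^ 2) := by
    calc S / E ^ 2 = q (p (S / E ^ 2)) := (hq_inv _ hSE).symm
      _ ≤ q (ε ^ 2 / E ^ 2) :=
        hq_mono (Set.mem_Ioi.mpr (hp_pos _ hSE)) htpos hple
  have hSle : S ≤ E ^ 2 * q (ε ^ 2 / E ^ 2) := by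
    rw [div_le_iff₀ hE2pos] at hfinal
    linarith [hfinal]
  calc Real.sqrt S ≤ Real.sqrt (E ^ 2 * q (ε ^ 2 / E ^ 2)) := Real.sqrt_le_sqrt hSle
    _ = E * Real.sqrt (q (ε ^ 2 / E ^ 2)) := by
        rw [Real.sqrt_mul (by positivity), Real.sqrt_sq (le_of_lt hE)]
end
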